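/- Let 𝒳_j and 𝒴_j, j ∈ ℕ, be two independent sequences of σ-fields, each φ-mixing with coefficients φ_𝒳(k) and φ_𝒴(k). Define 𝒵_j = σ-field generated jointly by 𝒳_j and 𝒴_j (product σ-field). Then the φ-mixing coefficients of (𝒵_j) satisfy φ_𝒵(k) ≤ φ_𝒳(k) + φ_𝒴(k) − φ_𝒳(k)φ_𝒴(k), and consequently Σ_k √(φ_𝒵(k)) ≤ Σ_k √(φ_𝒳(k)) + Σ_k √(φ_𝒴(k)). -/

import Mathlib

/-!
`φ(𝒜, ℬ)` is the largest total variation distance, on `𝒜`, between `P` and a conditioned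
measure `P(· | B)` with `B ∈ ℬ`. Take `B = G ∩ H` a rectangle with `G ∈ 𝒳_s`, `H ∈ 𝒴_s`, and
look at `A ∈ 𝒳_j ⊔ 𝒴_j` through finite partitions of `𝒳_j` and `𝒴_j`. By independence, both
`P` and `P(· | G ∩ H)` give product weights `p ⊗ q` and `p' ⊗ q'` to the cells. The overlap
`∑ min` of the weights is multiplicative. Each factor has overlap at least `1 - φ`, so the total
variation is at most `1 - (1 - φ_𝒳)(1 - φ_𝒴)`. In the form
`|P(A ∩ B) - P(A) P(B)| ≤ (φ_𝒳 + φ_𝒴 - φ_𝒳 φ_𝒴) P(B)` the bound adds up over the disjoint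
rectangles that make up a finite union. Such unions are dense in `𝒳_j ⊔ 𝒴_j` and in
`𝒳_s ⊔ 𝒴_s`, which gives the general case. The series bound then follows from
`√(a + b - ab) ≤ √a + √b`.
-/

open MeasureTheory ProbabilityTheory

/-- The `φ`-dependence coefficient between two sub-σ-fields:
`φ(𝒜,ℬ) = sup{|P(A) − P(A∩B)/P(B)| : A ∈ 𝒜, B ∈ ℬ, P(B) ≠ 0}`. -/
noncomputable def phiCoef {Ω : Type*} [MeasurableSpace Ω] (μ : Measure Ω)
    (mA mB : MeasurableSpace Ω) : ℝ :=
  sSup {r : ℝ | ∃ A B : Set Ω, MeasurableSet[mA] A ∧ MeasurableSet[mB] B ∧ μ B ≠ 0 ∧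
    r = |(μ A).toReal - (μ (A ∩ B)).toReal / (μ B).toReal|}

/-- The `φ`-mixing coefficients of a sequence of σ-fields:
`φ_𝒜(k) = sup_{|j−s|≥k} φ(𝒜_j, 𝒜_s)`. -/
noncomputable def phiMix {Ω : Type*} [MeasurableSpace Ω] (μ : Measure Ω)
    (mseq : ℕ → MeasurableSpace Ω) (k : ℕ) : ℝ :=
  sSup {r : ℝ | ∃ j s : ℕ, (k : ℤ) ≤ |(j : ℤ) - s| ∧ r = phiCoef μ (mseq j) (mseq s)}

open scoped symmDiff

section

variable {Ω : Type*}

section FiniteSums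

variable {β : Type*} [Fintype β]

lemma abs_sum_sub_sum_le_sum_sub_sum_min {p q : β → ℝ} (hpq : ∑ x, p x = ∑ x, q x)
    (S : Finset β) :
    |∑ x ∈ S, p x - ∑ x ∈ S, q x| ≤ ∑ x, p x - ∑ x, min (p x) (q x) := by
  have hp : ∀ x, 0 ≤ p x - min (p x) (q x) := fun x => sub_nonneg.2 (min_le_left _ _)
  have hq : ∀ x, 0 ≤ q x - min (p x) (q x) := fun x => sub_nonneg.2 (min_le_right _ _)
  have hpS := Finset.sum_le_univ_sum_of_nonneg (s := S) hp
  have hqS := Finset.sum_le_univ_sum_of_nonneg (s := S) hq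
  have hpS₀ := Finset.sum_nonneg fun x (_ : x ∈ S) => hp x
  have hqS₀ := Finset.sum_nonneg fun x (_ : x ∈ S) => hq x
  simp only [Finset.sum_sub_distrib] at hpS hqS hpS₀ hqS₀
  rw [abs_sub_le_iff]
  constructor <;> linarith

lemma sum_min_eq_sum_sub_sum_filter (p q : β → ℝ) :
    ∑ x, min (p x) (q x) = ∑ x, p x - ∑ x with q x < p x, (p x - q x) := by
  rw [Finset.sum_filter, eq_sub_iff_add_eq, ← Finset.sum_add_distrib]
  refine Finset.sum_congr rfl fun x _ => ?_
  split_ifs with h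
  · rw [min_eq_right h.le]; ring
  · rw [min_eq_left (not_lt.1 h), add_zero]

end FiniteSums

lemma preimage_pair_singleton {ι κ : Type*} (e : Ω → ι) (f : Ω → κ) (x : ι × κ) :
    (fun ω => (e ω, f ω)) ⁻¹' {x} = e ⁻¹' {x.1} ∩ f ⁻¹' {x.2} := by
  rw [← Set.mk_preimage_prod, Set.singleton_prod_singleton]

lemma measurableSet_preimage_of_fibers {β : Type*} [Finite β] {m : MeasurableSpace Ω}
    {g : Ω → β} (hg : ∀ x, MeasurableSet[m] (g ⁻¹' {x})) (T : Set β) :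
    MeasurableSet[m] (g ⁻¹' T) := by
  rw [← Set.biUnion_preimage_singleton]
  exact T.toFinite.measurableSet_biUnion fun x _ => hg x

section Overlap

variable {β : Type*} [Fintype β] [MeasurableSpace Ω]

/-- For probability measures, `1 - overlap ν₁ ν₂ g` is the total variation distance between the
laws of `g` under `ν₁` and `ν₂`. -/
noncomputable def overlap (ν₁ ν₂ : Measure Ω) (g : Ω → β) : ℝ :=
  ∑ x, min (ν₁.real (g ⁻¹' {x})) (ν₂.real (g ⁻¹' {x}))

lemma overlap_nonneg (ν₁ ν₂ : Measure Ω) (g : Ω → β) : 0 ≤ overlap ν₁ ν₂ g :=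
  Finset.sum_nonneg fun _ _ => le_min measureReal_nonneg measureReal_nonneg

lemma overlap_mul_overlap_le_overlap_pair {ι κ : Type*} [Fintype ι] [Fintype κ]
    {ν₁ ν₂ ν₁' ν₂' μ₁ μ₂ : Measure Ω} {e : Ω → ι} {f : Ω → κ}
    (h₁ : ∀ i k, μ₁.real (e ⁻¹' {i} ∩ f ⁻¹' {k}) = ν₁.real (e ⁻¹' {i}) * ν₁'.real (f ⁻¹' {k}))
    (h₂ : ∀ i k, μ₂.real (e ⁻¹' {i} ∩ f ⁻¹' {k}) = ν₂.real (e ⁻¹' {i}) * ν₂'.real (f ⁻¹' {k})) :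
    overlap ν₁ ν₂ e * overlap ν₁' ν₂' f ≤ overlap μ₁ μ₂ (fun ω => (e ω, f ω)) := by
  rw [overlap, overlap, overlap, Finset.sum_mul_sum, ← Fintype.sum_prod_type']
  refine Finset.sum_le_sum fun x _ => ?_
  rw [preimage_pair_singleton, h₁, h₂]
  exact le_min
    (mul_le_mul (min_le_left _ _) (min_le_left _ _) (le_min measureReal_nonneg measureReal_nonneg)
      measureReal_nonneg)
    (mul_le_mul (min_le_right _ _) (min_le_right _ _)
      (le_min measureReal_nonneg measureReal_nonneg) measureReal_nonneg)

variable {g : Ω → β} (hg : ∀ x, MeasurableSet (g ⁻¹' {x}))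
include hg

lemma sum_measureReal_fiber_eq_one (ν : Measure Ω) [IsProbabilityMeasure ν] :
    ∑ x, ν.real (g ⁻¹' {x}) = 1 := by
  rw [sum_measureReal_preimage_singleton _ fun x _ => hg x, Finset.coe_univ, Set.preimage_univ,
    probReal_univ]

variable {ν₁ ν₂ : Measure Ω} [IsProbabilityMeasure ν₁] [IsProbabilityMeasure ν₂]

lemma abs_measureReal_preimage_sub_le_one_sub_overlap (S : Set β) :
    |ν₁.real (g ⁻¹' S) - ν₂.real (g ⁻¹' S)| ≤ 1 - overlap ν₁ ν₂ g := by
  classical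
  have h₁ := sum_measureReal_fiber_eq_one hg ν₁
  have h₂ := sum_measureReal_fiber_eq_one hg ν₂
  rw [← Set.coe_toFinset S, ← sum_measureReal_preimage_singleton _ fun x _ => hg x,
    ← sum_measureReal_preimage_singleton _ fun x _ => hg x, ← h₁, overlap]
  exact abs_sum_sub_sum_le_sum_sub_sum_min (h₁.trans h₂.symm) _

lemma exists_measureReal_preimage_sub_eq_one_sub_overlap :
    ∃ T : Set β, ν₁.real (g ⁻¹' T) - ν₂.real (g ⁻¹' T) = 1 - overlap ν₁ ν₂ g := by
  classical
  refine ⟨↑(Finset.univ.filter fun x => ν₂.real (g ⁻¹' {x}) < ν₁.real (g ⁻¹' {x})), ?_⟩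
  rw [overlap, sum_min_eq_sum_sub_sum_filter, sum_measureReal_fiber_eq_one hg, sub_sub_cancel,
    Finset.sum_sub_distrib, sum_measureReal_preimage_singleton _ fun x _ => hg x,
    sum_measureReal_preimage_singleton _ fun x _ => hg x]

end Overlap

section GridSets

/-- `t` is a union of cells `e ⁻¹' {i} ∩ f ⁻¹' {k}` of two finite partitions of `Ω`, measurable
for `mA` and `mB` respectively; the partitions are encoded by their labelling maps `e` and `f`. -/
def IsGridSet (mA mB : MeasurableSpace Ω) (t : Set Ω) : Prop :=
  ∃ (ι κ : Type) (_ : Fintype ι) (_ : Fintype κ) (e : Ω → ι) (f : Ω → κ) (S : Set (ι × κ)),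
    (∀ i, MeasurableSet[mA] (e ⁻¹' {i})) ∧ (∀ k, MeasurableSet[mB] (f ⁻¹' {k})) ∧
      t = (fun ω => (e ω, f ω)) ⁻¹' S

variable {mA mB : MeasurableSpace Ω}

lemma isGridSet_inter {E F : Set Ω} (hE : MeasurableSet[mA] E) (hF : MeasurableSet[mB] F) :
    IsGridSet mA mB (E ∩ F) := by
  classical
  refine ⟨Bool, Bool, inferInstance, inferInstance, fun ω => decide (ω ∈ E),
    fun ω => decide (ω ∈ F), {(true, true)}, fun i => ?_, fun k => ?_, ?_⟩
  · cases i
    · simpa [Set.preimage, ← Set.compl_def] using hE.compl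
    · simpa [Set.preimage] using hE
  · cases k
    · simpa [Set.preimage, ← Set.compl_def] using hF.compl
    · simpa [Set.preimage] using hF
  · ext ω; simp

lemma IsGridSet.setOf (op : Prop → Prop → Prop) {t₁ t₂ : Set Ω} (h₁ : IsGridSet mA mB t₁)
    (h₂ : IsGridSet mA mB t₂) : IsGridSet mA mB {ω | op (ω ∈ t₁) (ω ∈ t₂)} := by
  obtain ⟨ι₁, κ₁, _, _, e₁, f₁, S₁, he₁, hf₁, rfl⟩ := h₁
  obtain ⟨ι₂, κ₂, _, _, e₂, f₂, S₂, he₂, hf₂, rfl⟩ := h₂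
  refine ⟨ι₁ × ι₂, κ₁ × κ₂, inferInstance, inferInstance, fun ω => (e₁ ω, e₂ ω),
    fun ω => (f₁ ω, f₂ ω), {x | op ((x.1.1, x.2.1) ∈ S₁) ((x.1.2, x.2.2) ∈ S₂)},
    fun i => ?_, fun k => ?_, rfl⟩
  · rw [preimage_pair_singleton]; exact (he₁ _).inter (he₂ _)
  · rw [preimage_pair_singleton]; exact (hf₁ _).inter (hf₂ _)

lemma isSetRing_isGridSet : IsSetRing {t : Set Ω | IsGridSet mA mB t} where
  empty_mem := by
    simpa using isGridSet_inter (@MeasurableSet.empty _ mA) (@MeasurableSet.empty _ mB)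
  union_mem _ _ h₁ h₂ := h₁.setOf (· ∨ ·) h₂
  sdiff_mem _ _ h₁ h₂ := h₁.setOf (fun p q => p ∧ ¬q) h₂

lemma IsGridSet.measurableSet {t : Set Ω} (ht : IsGridSet mA mB t) :
    MeasurableSet[mA ⊔ mB] t := by
  obtain ⟨ι, κ, _, _, e, f, S, he, hf, rfl⟩ := ht
  refine measurableSet_preimage_of_fibers (fun x => ?_) S
  rw [preimage_pair_singleton]
  exact (le_sup_left (a := mA) _ (he _)).inter (le_sup_right (a := mA) _ (hf _))

lemma sup_eq_generateFrom_isGridSet :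
    mA ⊔ mB = MeasurableSpace.generateFrom {t | IsGridSet mA mB t} := by
  refine le_antisymm (sup_le (fun E hE => ?_) (fun F hF => ?_))
    (MeasurableSpace.generateFrom_le fun t ht => ht.measurableSet)
  · exact MeasurableSpace.measurableSet_generateFrom
      (by simpa using isGridSet_inter hE (@MeasurableSet.univ _ mB))
  · exact MeasurableSpace.measurableSet_generateFrom
      (by simpa using isGridSet_inter (@MeasurableSet.univ _ mA) hF)

lemma exists_isGridSet_measureReal_symmDiff_le {mΩ : MeasurableSpace Ω} (μ : Measure Ω)
    [IsFiniteMeasure μ] (hle : mA ⊔ mB ≤ mΩ) {s : Set Ω} (hs : MeasurableSet[mA ⊔ mB] s)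
    {ε : ℝ} (hε : 0 < ε) : ∃ t, IsGridSet mA mB t ∧ μ.real (t ∆ s) ≤ ε := by
  have huniv : IsGridSet mA mB Set.univ := by
    simpa using isGridSet_inter (@MeasurableSet.univ _ mA) (@MeasurableSet.univ _ mB)
  obtain ⟨t, ht, hts⟩ := @exists_measure_symmDiff_lt_of_generateFrom_isSetRing Ω (mA ⊔ mB)
    (μ.trim hle) _ _ isSetRing_isGridSet
    ⟨{Set.univ}, Set.countable_singleton _, by simpa using huniv, by simp⟩
    sup_eq_generateFrom_isGridSet s hs (ENNReal.ofReal ε) (by simpa using hε)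
  rw [trim_measurableSet_eq hle (ht.measurableSet.symmDiff hs)] at hts
  exact ⟨t, ht, ENNReal.toReal_le_of_le_ofReal hε.le hts.le⟩

end GridSets

section Conditioning

variable {mΩ : MeasurableSpace Ω} {μ : Measure Ω}

lemma measureReal_cond_apply {s : Set Ω} (hs : MeasurableSet s) (t : Set Ω) :
    μ[|s].real t = (μ.real s)⁻¹ * μ.real (s ∩ t) := by
  rw [measureReal_def, cond_apply hs, ENNReal.toReal_mul, ENNReal.toReal_inv]; rfl

lemma ProbabilityTheory.Indep.measureReal_inter {m₁ m₂ : MeasurableSpace Ω} (h : Indep m₁ m₂ μ)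
    {s t : Set Ω} (hs : MeasurableSet[m₁] s) (ht : MeasurableSet[m₂] t) :
    μ.real (s ∩ t) = μ.real s * μ.real t := by
  rw [measureReal_def, (Indep_iff _ _ _).1 h s t hs ht, ENNReal.toReal_mul]; rfl

lemma ProbabilityTheory.Indep.measureReal_cond_inter {m₁ m₂ : MeasurableSpace Ω}
    (h : Indep m₁ m₂ μ) (hm₁ : m₁ ≤ mΩ) (hm₂ : m₂ ≤ mΩ) {E F G H : Set Ω}
    (hE : MeasurableSet[m₁] E) (hF : MeasurableSet[m₂] F) (hG : MeasurableSet[m₁] G)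
    (hH : MeasurableSet[m₂] H) :
    μ[|G ∩ H].real (E ∩ F) = μ[|G].real E * μ[|H].real F := by
  rw [measureReal_cond_apply ((hm₁ _ hG).inter (hm₂ _ hH)), measureReal_cond_apply (hm₁ _ hG),
    measureReal_cond_apply (hm₂ _ hH), Set.inter_inter_inter_comm, h.measureReal_inter hG hH,
    h.measureReal_inter (hG.inter hE) (hH.inter hF), mul_inv]
  ring

end Conditioning

lemma abs_measureReal_inter_sub_mul_le_of_approx {mΩ : MeasurableSpace Ω} {μ : Measure Ω}
    [IsProbabilityMeasure μ] {A B : Set Ω} (hA : MeasurableSet A) (hB : MeasurableSet B)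
    {c : ℝ} (hc : 0 ≤ c)
    (h : ∀ ε > 0, ∃ t s, MeasurableSet t ∧ MeasurableSet s ∧ μ.real (t ∆ A) ≤ ε ∧
      μ.real (s ∆ B) ≤ ε ∧ |μ.real (t ∩ s) - μ.real t * μ.real s| ≤ c * μ.real s) :
    |μ.real (A ∩ B) - μ.real A * μ.real B| ≤ c * μ.real B := by
  refine le_of_forall_pos_le_add fun ε hε => ?_
  set δ := ε / (4 + c)
  have hδ : (4 + c) * δ = ε := mul_div_cancel₀ _ (by positivity)
  have hδ₀ : 0 < δ := by positivity
  obtain ⟨t, s, ht, hs, htA, hsB, hts⟩ := h δ hδ₀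
  have hA' : |μ.real t - μ.real A| ≤ δ :=
    (abs_measureReal_sub_le_measureReal_symmDiff ht.nullMeasurableSet hA.nullMeasurableSet).trans
      htA
  have hB' : |μ.real s - μ.real B| ≤ δ :=
    (abs_measureReal_sub_le_measureReal_symmDiff hs.nullMeasurableSet hB.nullMeasurableSet).trans
      hsB
  have hAB : |μ.real (t ∩ s) - μ.real (A ∩ B)| ≤ 2 * δ := by
    have hsub : (t ∩ s) ∆ (A ∩ B) ⊆ t ∆ A ∪ s ∆ B := fun ω => by
      simp only [Set.mem_symmDiff, Set.mem_inter_iff, Set.mem_union]; tauto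
    refine (abs_measureReal_sub_le_measureReal_symmDiff (ht.inter hs).nullMeasurableSet
      (hA.inter hB).nullMeasurableSet).trans ?_
    linarith [measureReal_mono hsub (μ := μ), measureReal_union_le (μ := μ) (t ∆ A) (s ∆ B)]
  have hprod : |μ.real t * μ.real s - μ.real A * μ.real B| ≤ 2 * δ := by
    rw [show μ.real t * μ.real s - μ.real A * μ.real B
      = (μ.real t - μ.real A) * μ.real s + μ.real A * (μ.real s - μ.real B) by ring]
    refine (abs_add_le _ _).trans ?_
    rw [abs_mul, abs_mul, abs_of_nonneg measureReal_nonneg, abs_of_nonneg measureReal_nonneg]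
    linarith [mul_le_mul hA' (measureReal_le_one (μ := μ) (s := s)) measureReal_nonneg hδ₀.le,
      mul_le_mul (measureReal_le_one (μ := μ) (s := A)) hB' (abs_nonneg _) zero_le_one]
  have hcs : c * μ.real s ≤ c * μ.real B + c * δ := by
    rw [← mul_add]; exact mul_le_mul_of_nonneg_left (by linarith [(abs_le.1 hB').2]) hc
  rw [abs_le] at hAB hprod hts ⊢
  constructor <;> linarith

section PhiCoef

variable {mA mB mΩ : MeasurableSpace Ω} {μ : Measure Ω} [IsProbabilityMeasure μ]

lemma abs_measureReal_sub_div_le_one (A B : Set Ω) :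
    |μ.real A - μ.real (A ∩ B) / μ.real B| ≤ 1 :=
  abs_sub_le_of_nonneg_of_le measureReal_nonneg measureReal_le_one
    (div_nonneg measureReal_nonneg measureReal_nonneg)
    (div_le_one_of_le₀ (measureReal_mono Set.inter_subset_right) measureReal_nonneg)

lemma phiCoef_le {c : ℝ}
    (h : ∀ A B, MeasurableSet[mA] A → MeasurableSet[mB] B → μ B ≠ 0 →
      |μ.real A - μ.real (A ∩ B) / μ.real B| ≤ c) :
    phiCoef μ mA mB ≤ c :=
  csSup_le ⟨_, ∅, Set.univ, @MeasurableSet.empty _ mA, @MeasurableSet.univ _ mB, by simp, rfl⟩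
    (by rintro _ ⟨A, B, hA, hB, hB0, rfl⟩; exact h A B hA hB hB0)

lemma abs_measureReal_sub_div_le_phiCoef {A B : Set Ω} (hA : MeasurableSet[mA] A)
    (hB : MeasurableSet[mB] B) (hB0 : μ B ≠ 0) :
    |μ.real A - μ.real (A ∩ B) / μ.real B| ≤ phiCoef μ mA mB :=
  le_csSup ⟨1, by rintro _ ⟨A, B, -, -, -, rfl⟩; exact abs_measureReal_sub_div_le_one A B⟩
    ⟨A, B, hA, hB, hB0, rfl⟩

lemma phiCoef_nonneg : 0 ≤ phiCoef μ mA mB := by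
  simpa using abs_measureReal_sub_div_le_phiCoef (μ := μ) (@MeasurableSet.empty _ mA)
    (@MeasurableSet.univ _ mB) (by simp)

lemma phiCoef_le_one : phiCoef μ mA mB ≤ 1 :=
  phiCoef_le fun A B _ _ _ => abs_measureReal_sub_div_le_one A B

lemma one_sub_phiCoef_le_overlap (hA : mA ≤ mΩ) {β : Type*} [Fintype β] {g : Ω → β}
    (hg : ∀ x, MeasurableSet[mA] (g ⁻¹' {x})) {B : Set Ω} (hBm : MeasurableSet B)
    (hB : MeasurableSet[mB] B) (hB0 : μ B ≠ 0) :
    1 - phiCoef μ mA mB ≤ overlap μ μ[|B] g := by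
  have := cond_isProbabilityMeasure (μ := μ) hB0
  obtain ⟨T, hT⟩ :=
    exists_measureReal_preimage_sub_eq_one_sub_overlap (ν₁ := μ) (ν₂ := μ[|B]) fun x => hA _ (hg x)
  have hφ := abs_measureReal_sub_div_le_phiCoef (measurableSet_preimage_of_fibers hg T) hB hB0
  rw [measureReal_cond_apply hBm, Set.inter_comm, inv_mul_eq_div] at hT
  linarith [le_abs_self (μ.real (g ⁻¹' T) - μ.real (g ⁻¹' T ∩ B) / μ.real B)]

variable (mseq : ℕ → MeasurableSpace Ω) {k : ℕ}

lemma phiCoef_le_phiMix {j s : ℕ} (h : (k : ℤ) ≤ |(j : ℤ) - s|) :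
    phiCoef μ (mseq j) (mseq s) ≤ phiMix μ mseq k :=
  le_csSup ⟨1, by rintro _ ⟨j, s, -, rfl⟩; exact phiCoef_le_one⟩ ⟨j, s, h, rfl⟩

omit [IsProbabilityMeasure μ] in
lemma phiMix_le {c : ℝ}
    (h : ∀ j s : ℕ, (k : ℤ) ≤ |(j : ℤ) - s| → phiCoef μ (mseq j) (mseq s) ≤ c) :
    phiMix μ mseq k ≤ c :=
  csSup_le ⟨_, k, 0, by simp, rfl⟩ (by rintro _ ⟨j, s, hjs, rfl⟩; exact h j s hjs)

lemma phiMix_nonneg : 0 ≤ phiMix μ mseq k :=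
  phiCoef_nonneg.trans (phiCoef_le_phiMix mseq (j := k) (s := 0) (by simp))

lemma phiMix_le_one : phiMix μ mseq k ≤ 1 :=
  phiMix_le mseq fun _ _ _ => phiCoef_le_one

end PhiCoef

section Join

variable {mX₁ mX₂ mY₁ mY₂ mΩ : MeasurableSpace Ω} {μ : Measure Ω} [IsProbabilityMeasure μ]
  (hX₁ : mX₁ ≤ mΩ) (hX₂ : mX₂ ≤ mΩ) (hY₁ : mY₁ ≤ mΩ) (hY₂ : mY₂ ≤ mΩ)
  (hindep : Indep (mX₁ ⊔ mX₂) (mY₁ ⊔ mY₂) μ)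
include hX₁ hX₂ hY₁ hY₂ hindep

lemma abs_measureReal_sub_cond_le_of_isGridSet {G H : Set Ω} (hG : MeasurableSet[mX₂] G)
    (hH : MeasurableSet[mY₂] H) (hGH : μ (G ∩ H) ≠ 0) {t : Set Ω} (ht : IsGridSet mX₁ mY₁ t) :
    |μ.real t - μ[|G ∩ H].real t| ≤ phiCoef μ mX₁ mX₂ + phiCoef μ mY₁ mY₂
      - phiCoef μ mX₁ mX₂ * phiCoef μ mY₁ mY₂ := by
  obtain ⟨ι, κ, _, _, e, f, S, he, hf, rfl⟩ := ht
  have := cond_isProbabilityMeasure hGH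
  have hXsup : mX₁ ⊔ mX₂ ≤ mΩ := sup_le hX₁ hX₂
  have hYsup : mY₁ ⊔ mY₂ ≤ mΩ := sup_le hY₁ hY₂
  have hX := one_sub_phiCoef_le_overlap hX₁ he (hX₂ _ hG) hG
    fun h => hGH (measure_mono_null Set.inter_subset_left h)
  have hY := one_sub_phiCoef_le_overlap hY₁ hf (hY₂ _ hH) hH
    fun h => hGH (measure_mono_null Set.inter_subset_right h)
  -- Under `μ[|G ∩ H]`, the labels `e` and `f` are still independent, with laws from `μ[|G]` and
  -- `μ[|H]`.
  have hpair : overlap μ μ[|G] e * overlap μ μ[|H] f ≤ overlap μ μ[|G ∩ H] (fun ω => (e ω, f ω)) :=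
    overlap_mul_overlap_le_overlap_pair
      (fun i k => hindep.measureReal_inter (le_sup_left (b := mX₂) _ (he i))
        (le_sup_left (b := mY₂) _ (hf k)))
      (fun i k => hindep.measureReal_cond_inter hXsup hYsup (le_sup_left (b := mX₂) _ (he i))
        (le_sup_left (b := mY₂) _ (hf k)) (le_sup_right (a := mX₁) _ hG)
        (le_sup_right (a := mY₁) _ hH))
  have hfib : ∀ x : ι × κ, MeasurableSet ((fun ω => (e ω, f ω)) ⁻¹' {x}) := fun x => by
    rw [preimage_pair_singleton]; exact (hX₁ _ (he _)).inter (hY₁ _ (hf _))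
  calc |μ.real _ - μ[|G ∩ H].real _|
      ≤ 1 - overlap μ μ[|G ∩ H] (fun ω => (e ω, f ω)) :=
        abs_measureReal_preimage_sub_le_one_sub_overlap hfib S
    _ ≤ 1 - (1 - phiCoef μ mX₁ mX₂) * (1 - phiCoef μ mY₁ mY₂) := by
        have := mul_le_mul hX hY (sub_nonneg.2 phiCoef_le_one) (overlap_nonneg _ _ _)
        linarith
    _ = _ := by ring

lemma abs_measureReal_inter_sub_mul_le_of_isGridSet {t s : Set Ω} (ht : IsGridSet mX₁ mY₁ t)
    (hs : IsGridSet mX₂ mY₂ s) :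
    |μ.real (t ∩ s) - μ.real t * μ.real s| ≤ (phiCoef μ mX₁ mX₂ + phiCoef μ mY₁ mY₂
      - phiCoef μ mX₁ mX₂ * phiCoef μ mY₁ mY₂) * μ.real s := by
  set c := phiCoef μ mX₁ mX₂ + phiCoef μ mY₁ mY₂ - phiCoef μ mX₁ mX₂ * phiCoef μ mY₁ mY₂
  have htm : MeasurableSet t := sup_le hX₁ hY₁ _ ht.measurableSet
  have hcell : ∀ G H, MeasurableSet[mX₂] G → MeasurableSet[mY₂] H →
      |μ.real (G ∩ H ∩ t) - μ.real t * μ.real (G ∩ H)| ≤ c * μ.real (G ∩ H) := by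
    intro G H hG hH
    rcases eq_or_ne (μ (G ∩ H)) 0 with h0 | h0
    · have h0' : μ.real (G ∩ H) = 0 := (measureReal_eq_zero_iff (measure_ne_top _ _)).2 h0
      simp [h0', measureReal_mono_null Set.inter_subset_left h0']
    · have hpos : 0 < μ.real (G ∩ H) := ENNReal.toReal_pos h0 (measure_ne_top _ _)
      have key := abs_measureReal_sub_cond_le_of_isGridSet hX₁ hX₂ hY₁ hY₂ hindep hG hH h0 ht
      rw [measureReal_cond_apply ((hX₂ _ hG).inter (hY₂ _ hH))] at key
      calc |μ.real (G ∩ H ∩ t) - μ.real t * μ.real (G ∩ H)|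
          = |μ.real t - (μ.real (G ∩ H))⁻¹ * μ.real (G ∩ H ∩ t)| * μ.real (G ∩ H) := by
            rw [← abs_of_pos hpos, ← abs_mul, abs_of_pos hpos, abs_sub_comm]
            congr 1
            field_simp
        _ ≤ c * μ.real (G ∩ H) := mul_le_mul_of_nonneg_right key hpos.le
  obtain ⟨ι, κ, _, _, e, f, S, he, hf, rfl⟩ := hs
  classical
  have hfib : ∀ y ∈ S.toFinset, MeasurableSet ((fun ω => (e ω, f ω)) ⁻¹' {y}) := fun y _ => by
    rw [preimage_pair_singleton]; exact (hX₂ _ (he _)).inter (hY₂ _ (hf _))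
  rw [← Set.coe_toFinset S, Set.inter_comm, ← measureReal_restrict_apply' htm,
    ← sum_measureReal_preimage_singleton _ hfib, ← sum_measureReal_preimage_singleton _ hfib,
    Finset.mul_sum, Finset.mul_sum, ← Finset.sum_sub_distrib]
  refine (Finset.abs_sum_le_sum_abs _ _).trans (Finset.sum_le_sum fun y _ => ?_)
  rw [measureReal_restrict_apply' htm, preimage_pair_singleton]
  exact hcell _ _ (he _) (hf _)

theorem phiCoef_sup_le :
    phiCoef μ (mX₁ ⊔ mY₁) (mX₂ ⊔ mY₂) ≤ phiCoef μ mX₁ mX₂ + phiCoef μ mY₁ mY₂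
      - phiCoef μ mX₁ mX₂ * phiCoef μ mY₁ mY₂ := by
  have hc : 0 ≤ phiCoef μ mX₁ mX₂ + phiCoef μ mY₁ mY₂ - phiCoef μ mX₁ mX₂ * phiCoef μ mY₁ mY₂ := by
    nlinarith [phiCoef_nonneg (μ := μ) (mA := mX₁) (mB := mX₂),
      phiCoef_le_one (μ := μ) (mA := mX₁) (mB := mX₂),
      phiCoef_nonneg (μ := μ) (mA := mY₁) (mB := mY₂)]
  refine phiCoef_le fun A B hA hB hB0 => ?_
  have key := abs_measureReal_inter_sub_mul_le_of_approx (sup_le hX₁ hY₁ _ hA)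
    (sup_le hX₂ hY₂ _ hB) hc fun ε hε => by
      obtain ⟨t, ht, htA⟩ := exists_isGridSet_measureReal_symmDiff_le μ (sup_le hX₁ hY₁) hA hε
      obtain ⟨s, hs, hsB⟩ := exists_isGridSet_measureReal_symmDiff_le μ (sup_le hX₂ hY₂) hB hε
      exact ⟨t, s, sup_le hX₁ hY₁ _ ht.measurableSet, sup_le hX₂ hY₂ _ hs.measurableSet, htA, hsB,
        abs_measureReal_inter_sub_mul_le_of_isGridSet hX₁ hX₂ hY₁ hY₂ hindep ht hs⟩
  have hpos : 0 < μ.real B := ENNReal.toReal_pos hB0 (measure_ne_top _ _)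
  rw [sub_div' hpos.ne', abs_div, abs_of_pos hpos, div_le_iff₀ hpos, abs_sub_comm]
  exact key

end Join

theorem phiMix_sup_le {mΩ : MeasurableSpace Ω} {μ : Measure Ω} [IsProbabilityMeasure μ]
    {mX mY : ℕ → MeasurableSpace Ω} (hX : ∀ j, mX j ≤ mΩ) (hY : ∀ j, mY j ≤ mΩ)
    (hindep : Indep (⨆ j, mX j) (⨆ j, mY j) μ) (k : ℕ) :
    phiMix μ (fun j => mX j ⊔ mY j) k ≤
      phiMix μ mX k + phiMix μ mY k - phiMix μ mX k * phiMix μ mY k := by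
  refine phiMix_le _ fun j s hjs => (phiCoef_sup_le (hX j) (hX s) (hY j) (hY s)
    (indep_of_indep_of_le hindep (sup_le (le_iSup mX j) (le_iSup mX s))
      (sup_le (le_iSup mY j) (le_iSup mY s)))).trans ?_
  have ha := phiCoef_le_phiMix (μ := μ) mX hjs
  have hb := phiCoef_le_phiMix (μ := μ) mY hjs
  nlinarith [phiCoef_nonneg (μ := μ) (mA := mX j) (mB := mX s),
    phiCoef_nonneg (μ := μ) (mA := mY j) (mB := mY s),
    phiMix_le_one (μ := μ) mX (k := k), phiMix_le_one (μ := μ) mY (k := k)]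

lemma Real.sqrt_add_le_add_sqrt {x y : ℝ} (hx : 0 ≤ x) (hy : 0 ≤ y) : √(x + y) ≤ √x + √y := by
  rw [Real.sqrt_le_iff]
  refine ⟨by positivity, ?_⟩
  nlinarith [Real.sq_sqrt hx, Real.sq_sqrt hy, Real.sqrt_nonneg x, Real.sqrt_nonneg y]

end

/-- for two independent `φ`-mixing sequences of σ-fields `(𝒳_j)` and `(𝒴_j)`,
the jointly generated sequence `𝒵_j = 𝒳_j ⊔ 𝒴_j` satisfies
`φ_𝒵(k) ≤ φ_𝒳(k) + φ_𝒴(k) − φ_𝒳(k)φ_𝒴(k)` and hence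
`∑ₖ √φ_𝒵(k) ≤ ∑ₖ √φ_𝒳(k) + ∑ₖ √φ_𝒴(k)`. -/
theorem phiMix_join {Ω : Type*} [mΩ : MeasurableSpace Ω] (μ : Measure Ω)
    [IsProbabilityMeasure μ]
    (mX mY : ℕ → MeasurableSpace Ω)
    (hXsub : ∀ j, mX j ≤ mΩ) (hYsub : ∀ j, mY j ≤ mΩ)
    (hindep : Indep (⨆ j, mX j) (⨆ j, mY j) μ)
    (hsumX : Summable fun k => Real.sqrt (phiMix μ mX k))
    (hsumY : Summable fun k => Real.sqrt (phiMix μ mY k)) :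
    (∀ k, phiMix μ (fun j => mX j ⊔ mY j) k ≤
        phiMix μ mX k + phiMix μ mY k - phiMix μ mX k * phiMix μ mY k) ∧
      ∑' k, Real.sqrt (phiMix μ (fun j => mX j ⊔ mY j) k) ≤
        (∑' k, Real.sqrt (phiMix μ mX k)) + ∑' k, Real.sqrt (phiMix μ mY k) := by
  have hmix := phiMix_sup_le hXsub hYsub hindep
  have hsqrt : ∀ k, √(phiMix μ (fun j => mX j ⊔ mY j) k) ≤ √(phiMix μ mX k) + √(phiMix μ mY k) :=
    fun k => (Real.sqrt_le_sqrt ((hmix k).trans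
      (sub_le_self _ (mul_nonneg (phiMix_nonneg mX) (phiMix_nonneg mY))))).trans
      (Real.sqrt_add_le_add_sqrt (phiMix_nonneg mX) (phiMix_nonneg mY))
  refine ⟨hmix, ?_⟩
  rw [← hsumX.tsum_add hsumY]
  exact ((hsumX.add hsumY).of_nonneg_of_le (fun _ => Real.sqrt_nonneg _) hsqrt).tsum_le_tsum hsqrt
    (hsumX.add hsumY)
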